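/- Set L_g = ρ/μ. Let γ > 0 and γ₂ > 0, let P ∈ ℝ^{N×N} be symmetric positive semidefinite with γ P ⪯ γ₂ I, let λ, x ∈ ℝᴺ, set λ⁺ = λ + γ P Z^{1/2} x, and let λ* be any maximizer of g (assumed to exist). Then the dual optimality gap satisfies: g(λ*) − g(λ⁺) ≤ [g(λ*) − g(λ)] − (1/2 − L_g γ₂) ‖∇g(λ)‖²_{γP} + ((2 L_g ρ γ₂² + ρ γ₂)/(2 μ²)) ‖∇_x L̃_α(x, λ)‖². -/

import Mathlib

open Matrix Set
open scoped RealInnerProductSpace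

noncomputable section

/-- The positive semidefinite square root of a positive semidefinite matrix
(the definition `Matrix.PosSemidef.sqrt` of the older Mathlib, since removed). -/
def Matrix.PosSemidef.sqrt {n : Type*} [Fintype n] [DecidableEq n] {A : Matrix n n ℝ}
    (hA : A.PosSemidef) : Matrix n n ℝ :=
  hA.1.eigenvectorUnitary.1 * diagonal ((↑) ∘ (fun x : ℝ => √x) ∘ hA.1.eigenvalues) *
    (star hA.1.eigenvectorUnitary : Matrix n n ℝ)

/-- The augmented Lagrangian `L̃_α(x, λ) = f(x) + ⟨λ, Z^{1/2} x⟩ + (α/2) xᵀ Z x`,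
where `Z^{1/2}` is the positive semidefinite square root of `Z`. -/
def augLag (N : ℕ) (f : EuclideanSpace ℝ (Fin N) → ℝ) (α : ℝ)
    (Z : Matrix (Fin N) (Fin N) ℝ) (hZ : Z.PosSemidef)
    (x lam : EuclideanSpace ℝ (Fin N)) : ℝ :=
  f x + ⟪lam, Matrix.toEuclideanLin hZ.sqrt x⟫ +
    α / 2 * ⟪x, Matrix.toEuclideanLin Z x⟫

lemma Matrix.PosSemidef.sqrt_mul_self {n : Type*} [Fintype n] [DecidableEq n] {A : Matrix n n ℝ}
    (hA : A.PosSemidef) : hA.sqrt * hA.sqrt = A := by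
  have hU : (star hA.1.eigenvectorUnitary : Matrix n n ℝ) * hA.1.eigenvectorUnitary.1 = 1 :=
    Matrix.UnitaryGroup.star_mul_self _
  have hD : diagonal ((↑) ∘ (fun x : ℝ => √x) ∘ hA.1.eigenvalues) *
      diagonal ((↑) ∘ (fun x : ℝ => √x) ∘ hA.1.eigenvalues) = diagonal hA.1.eigenvalues := by
    rw [diagonal_mul_diagonal]
    congr 1
    funext i
    simp [Real.mul_self_sqrt (hA.eigenvalues_nonneg i)]
  have hspec : A = hA.1.eigenvectorUnitary.1 * diagonal hA.1.eigenvalues *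
      (star hA.1.eigenvectorUnitary : Matrix n n ℝ) := by
    have := hA.1.spectral_theorem
    simpa [Unitary.conjStarAlgAut_apply] using this
  unfold Matrix.PosSemidef.sqrt
  calc _ = hA.1.eigenvectorUnitary.1 * diagonal ((↑) ∘ (fun x : ℝ => √x) ∘ hA.1.eigenvalues) *
      ((star hA.1.eigenvectorUnitary : Matrix n n ℝ) * hA.1.eigenvectorUnitary.1) *
      diagonal ((↑) ∘ (fun x : ℝ => √x) ∘ hA.1.eigenvalues) *
      (star hA.1.eigenvectorUnitary : Matrix n n ℝ) := by simp only [Matrix.mul_assoc]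
    _ = hA.1.eigenvectorUnitary.1 * diagonal hA.1.eigenvalues *
      (star hA.1.eigenvectorUnitary : Matrix n n ℝ) := by
      rw [hU, Matrix.mul_one, Matrix.mul_assoc _ (diagonal _) (diagonal _), hD]
    _ = A := hspec.symm

lemma Matrix.PosSemidef.posSemidef_sqrt {n : Type*} [Fintype n] [DecidableEq n]
    {A : Matrix n n ℝ} (hA : A.PosSemidef) : hA.sqrt.PosSemidef := by
  have hdiag : (diagonal ((↑) ∘ (fun x : ℝ => √x) ∘ hA.1.eigenvalues) : Matrix n n ℝ).PosSemidef :=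
    Matrix.posSemidef_diagonal_iff.2 fun i => Real.sqrt_nonneg _
  exact hdiag.mul_mul_conjTranspose_same (hA.1.eigenvectorUnitary : Matrix n n ℝ)

variable {E : Type*} [NormedAddCommGroup E] [InnerProductSpace ℝ E] [CompleteSpace E]

/-- First-order condition for convex functions. -/
lemma convexOn_first_order_aux {h : E → ℝ} (hc : ConvexOn ℝ Set.univ h) {x : E}
    {D : E →L[ℝ] ℝ} (hd : HasFDerivAt h D x) (y : E) : h x + D (y - x) ≤ h y := by
  have curve : HasDerivAt (fun t : ℝ => x + t • (y - x)) (y - x) 0 := by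
    simpa using ((hasDerivAt_id (0:ℝ)).smul_const (y - x)).const_add x
  have hφ : HasDerivAt (fun t : ℝ => h (x + t • (y - x))) (D (y - x)) 0 := by
    have := hd.comp_hasDerivAt_of_eq 0 curve (by simp)
    exact this
  have hW : HasDerivWithinAt (fun t : ℝ => h (x + t • (y - x))) (D (y - x)) (Set.Ioi 0) 0 :=
    hφ.hasDerivWithinAt
  rw [hasDerivWithinAt_iff_tendsto_slope] at hW
  have hset : (Set.Ioi (0:ℝ)) \ {0} = Set.Ioi 0 := by
    simp
  rw [hset] at hW
  have hev : ∀ᶠ t in nhdsWithin (0:ℝ) (Set.Ioi 0),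
      slope (fun t : ℝ => h (x + t • (y - x))) 0 t ≤ h y - h x := by
    filter_upwards [Ioo_mem_nhdsGT_of_mem (show (0:ℝ) ∈ Set.Ico 0 1 by constructor <;> norm_num)]
      with t ht
    have ht0 : 0 < t := ht.1
    have ht1 : t < 1 := ht.2
    have key : h (x + t • (y - x)) ≤ (1 - t) * h x + t * h y := by
      have := hc.2 (Set.mem_univ x) (Set.mem_univ y)
        (show (0:ℝ) ≤ 1 - t by linarith) ht0.le (by ring)
      have hxy : (1 - t) • x + t • y = x + t • (y - x) := by
        rw [smul_sub, sub_smul, one_smul]; abel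
      rw [hxy] at this
      simpa using this
    rw [slope_def_field, div_le_iff₀ (by simpa using ht0)]
    simp only [zero_smul, add_zero]
    nlinarith
  have := le_of_tendsto hW hev
  linarith

set_option linter.unusedSectionVars false

lemma hasFDerivAt_const_mul_norm_sq (c : ℝ) (x : E) :
    HasFDerivAt (fun z : E => c * ‖z‖ ^ 2) ((2 * c) • (innerSL ℝ x : E →L[ℝ] ℝ)) x := by
  have h1 : HasFDerivAt (fun z : E => ⟪z, z⟫)
      ((fderivInnerCLM ℝ (x, x)).comp ((ContinuousLinearMap.id ℝ E).prod
        (ContinuousLinearMap.id ℝ E))) x :=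
    (hasFDerivAt_id x).inner ℝ (hasFDerivAt_id x)
  have h2 := h1.const_mul c
  have hfun : (fun z : E => c * ⟪z, z⟫) = fun z : E => c * ‖z‖ ^ 2 := by
    funext z; rw [real_inner_self_eq_norm_sq]
  rw [hfun] at h2
  refine h2.congr_fderiv ?_
  ext v
  simp [fderivInnerCLM_apply, real_inner_comm]
  ring

/-- First-order lower bound for strongly convex functions. -/
lemma strongConvexOn_first_order {μ : ℝ} {h : E → ℝ} (hc : StrongConvexOn Set.univ μ h)
    {x G : E} (hd : HasGradientAt h G x) (y : E) :
    h x + ⟪G, y - x⟫ + μ / 2 * ‖y - x‖ ^ 2 ≤ h y := by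
  have hconv : ConvexOn ℝ Set.univ fun z => h z - μ / 2 * ‖z‖ ^ 2 :=
    (strongConvexOn_iff_convex).1 hc
  have hq := hasFDerivAt_const_mul_norm_sq (μ / 2) x
  have hk : HasFDerivAt (fun z => h z - μ / 2 * ‖z‖ ^ 2)
      (InnerProductSpace.toDual ℝ E G - (2 * (μ / 2)) • (innerSL ℝ x : E →L[ℝ] ℝ)) x :=
    hd.hasFDerivAt.sub hq
  have := convexOn_first_order_aux hconv hk y
  simp only [ContinuousLinearMap.sub_apply, ContinuousLinearMap.smul_apply,
    InnerProductSpace.toDual_apply_apply, innerSL_apply_apply, smul_eq_mul] at this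
  have hns : ‖y - x‖ ^ 2 = ‖y‖ ^ 2 - 2 * ⟪y, x⟫ + ‖x‖ ^ 2 := norm_sub_sq_real y x
  have hir : ⟪x, y - x⟫ = ⟪x, y⟫ - ‖x‖ ^ 2 := by
    rw [inner_sub_right, real_inner_self_eq_norm_sq]
  rw [hir] at this
  have hcomm : ⟪y, x⟫ = ⟪x, y⟫ := real_inner_comm x y
  have hre : h x + ⟪G, y - x⟫ + μ / 2 * ‖y - x‖ ^ 2 =
      h x - μ / 2 * ‖x‖ ^ 2 + (⟪G, y - x⟫ - 2 * (μ / 2) * (⟪x, y⟫ - ‖x‖ ^ 2)) +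
        μ / 2 * ‖y‖ ^ 2 := by
    rw [hns, hcomm]; ring
  rw [hre]
  linarith

/-- Quadratic growth at a minimizer of a strongly convex function. -/
lemma strongConvexOn_min_growth {μ : ℝ} {h : E → ℝ} (hc : StrongConvexOn Set.univ μ h)
    {m G : E} (hd : HasGradientAt h G m) (hm : IsMinOn h Set.univ m) (y : E) :
    h m + μ / 2 * ‖y - m‖ ^ 2 ≤ h y := by
  have hz : InnerProductSpace.toDual ℝ E G = 0 :=
    (hm.isLocalMin Filter.univ_mem).hasFDerivAt_eq_zero hd.hasFDerivAt
  have hG : G = 0 := by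
    have := congrArg (InnerProductSpace.toDual ℝ E).symm hz
    simpa using this
  have := strongConvexOn_first_order hc hd y
  rw [hG] at this
  simpa using this

section MatrixLemmas

variable {n : Type*} [Fintype n] [DecidableEq n]

lemma inner_toEuclideanLin_eq (A : Matrix n n ℝ) (x y : EuclideanSpace ℝ n) :
    ⟪x, Matrix.toEuclideanLin A y⟫ =
      dotProduct (star ((WithLp.equiv 2 (n → ℝ)) x)) (A *ᵥ ((WithLp.equiv 2 (n → ℝ)) y)) := by
  simp only [Matrix.toEuclideanLin_apply, PiLp.inner_apply, dotProduct, WithLp.equiv,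
    RCLike.inner_apply, starRingEnd_apply, star_trivial, Pi.star_apply, Equiv.refl_apply]
  exact Finset.sum_congr rfl fun i _ => mul_comm _ _

lemma psd_inner_nonneg {A : Matrix n n ℝ} (hA : A.PosSemidef) (x : EuclideanSpace ℝ n) :
    0 ≤ ⟪x, Matrix.toEuclideanLin A x⟫ := by
  rw [inner_toEuclideanLin_eq]
  exact hA.dotProduct_mulVec_nonneg _

lemma herm_inner_symm {A : Matrix n n ℝ} (hA : A.IsHermitian) (x y : EuclideanSpace ℝ n) :
    ⟪Matrix.toEuclideanLin A x, y⟫ = ⟪x, Matrix.toEuclideanLin A y⟫ :=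
  (Matrix.isHermitian_iff_isSymmetric.1 hA) x y

lemma toEuclideanLin_mul_apply (A B : Matrix n n ℝ) (x : EuclideanSpace ℝ n) :
    Matrix.toEuclideanLin (A * B) x = Matrix.toEuclideanLin A (Matrix.toEuclideanLin B x) := by
  simp [Matrix.toEuclideanLin_apply, Matrix.mulVec_mulVec]

lemma toEuclideanLin_one_apply (x : EuclideanSpace ℝ n) :
    Matrix.toEuclideanLin (1 : Matrix n n ℝ) x = x := by
  simp [Matrix.toEuclideanLin_apply]

/-- If all real spectrum values of a Hermitian real matrix are at most `ρ`, then
`ρ • 1 - A` is positive semidefinite. -/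
lemma posSemidef_smul_one_sub_of_spectrum {A : Matrix n n ℝ} (hA : A.IsHermitian) {ρ : ℝ}
    (hub : ∀ c ∈ spectrum ℝ A, c ≤ ρ) : (ρ • (1 : Matrix n n ℝ) - A).PosSemidef := by
  have h1 : ∀ i, hA.eigenvalues i ≤ ρ := fun i => hub _ (hA.eigenvalues_mem_spectrum_real i)
  have hdiag : (Matrix.diagonal (fun i => ρ - hA.eigenvalues i)).PosSemidef :=
    Matrix.posSemidef_diagonal_iff.2 fun i => sub_nonneg.2 (h1 i)
  have hkey := hdiag.mul_mul_conjTranspose_same (hA.eigenvectorUnitary : Matrix n n ℝ)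
  have hU : (hA.eigenvectorUnitary : Matrix n n ℝ) * star (hA.eigenvectorUnitary : Matrix n n ℝ)
      = 1 := Matrix.mem_unitaryGroup_iff.mp hA.eigenvectorUnitary.2
  have hspec : A = (hA.eigenvectorUnitary : Matrix n n ℝ) *
      Matrix.diagonal hA.eigenvalues * star (hA.eigenvectorUnitary : Matrix n n ℝ) := by
    have := hA.spectral_theorem
    simpa using this
  have hexp : (hA.eigenvectorUnitary : Matrix n n ℝ) *
      Matrix.diagonal (fun i => ρ - hA.eigenvalues i) *
      ((hA.eigenvectorUnitary : Matrix n n ℝ))ᴴ = ρ • (1 : Matrix n n ℝ) - A := by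
    have hd : Matrix.diagonal (fun i => ρ - hA.eigenvalues i) =
        ρ • (1 : Matrix n n ℝ) - Matrix.diagonal hA.eigenvalues := by
      ext i j
      by_cases h : i = j <;>
        simp [Matrix.diagonal_apply, h, Matrix.one_apply, Matrix.sub_apply, Matrix.smul_apply]
    rw [hd, Matrix.mul_sub, Matrix.sub_mul]
    rw [Matrix.mul_smul, Matrix.smul_mul, Matrix.mul_one]
    rw [show ((hA.eigenvectorUnitary : Matrix n n ℝ))ᴴ
        = star (hA.eigenvectorUnitary : Matrix n n ℝ) from rfl, hU, ← hspec]
  rwa [hexp] at hkey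

end MatrixLemmas

section MatrixLemmas2

variable {n : Type*} [Fintype n] [DecidableEq n]

lemma psd_smul {A : Matrix n n ℝ} (hA : A.PosSemidef) {c : ℝ} (hc : 0 ≤ c) :
    (c • A).PosSemidef := by
  refine Matrix.PosSemidef.of_dotProduct_mulVec_nonneg ?_ ?_
  · have := hA.1
    unfold Matrix.IsHermitian at this ⊢
    rw [Matrix.conjTranspose_smul, this]
    simp
  · intro x
    have := hA.dotProduct_mulVec_nonneg x
    have h2 : dotProduct (star x) ((c • A) *ᵥ x)
        = c * dotProduct (star x) (A *ᵥ x) := by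
      rw [Matrix.smul_mulVec, dotProduct_smul, smul_eq_mul]
    rw [h2]
    positivity

lemma quad_le_of_psd_sub {A : Matrix n n ℝ} {c : ℝ}
    (h : (c • (1 : Matrix n n ℝ) - A).PosSemidef) (x : EuclideanSpace ℝ n) :
    ⟪x, Matrix.toEuclideanLin A x⟫ ≤ c * ‖x‖ ^ 2 := by
  have h0 := psd_inner_nonneg h x
  rw [map_sub, _root_.map_smul] at h0
  simp only [LinearMap.sub_apply, inner_sub_right, LinearMap.smul_apply, inner_smul_right,
    toEuclideanLin_one_apply] at h0
  rw [real_inner_self_eq_norm_sq] at h0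
  linarith

lemma sandwich_sq_le {Q : Matrix n n ℝ} (hQ : Q.PosSemidef) {c : ℝ}
    (h : (c • (1 : Matrix n n ℝ) - Q).PosSemidef) (w : EuclideanSpace ℝ n) :
    ⟪Matrix.toEuclideanLin Q w, Matrix.toEuclideanLin Q w⟫ ≤
      c * ⟪w, Matrix.toEuclideanLin Q w⟫ := by
  have hR : hQ.sqrt * hQ.sqrt = Q := hQ.sqrt_mul_self
  have hRH : (hQ.sqrt)ᴴ = hQ.sqrt := hQ.posSemidef_sqrt.isHermitian
  have hkey := h.mul_mul_conjTranspose_same hQ.sqrt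
  have hexp : hQ.sqrt * (c • (1 : Matrix n n ℝ) - Q) * (hQ.sqrt)ᴴ = c • Q - Q * Q := by
    rw [hRH, Matrix.mul_sub, Matrix.sub_mul, Matrix.mul_smul, Matrix.smul_mul, Matrix.mul_one,
      hR]
    have key : ∀ R : Matrix n n ℝ, R * R = Q → R * Q * R = Q * Q := by
      intro R hRR
      rw [← hRR]
      noncomm_ring
    rw [key hQ.sqrt hR]
  rw [hexp] at hkey
  have h0 := psd_inner_nonneg hkey w
  rw [map_sub, _root_.map_smul] at h0
  simp only [LinearMap.sub_apply, inner_sub_right, LinearMap.smul_apply, inner_smul_right] at h0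
  rw [toEuclideanLin_mul_apply] at h0
  rw [← herm_inner_symm hQ.1 w (Matrix.toEuclideanLin Q w)] at h0
  linarith

lemma cs_psd {Q : Matrix n n ℝ} (hQ : Q.PosSemidef) (d e : EuclideanSpace ℝ n) :
    ⟪d, Matrix.toEuclideanLin Q e⟫ ^ 2 ≤
      ⟪d, Matrix.toEuclideanLin Q d⟫ * ⟪e, Matrix.toEuclideanLin Q e⟫ := by
  have hR : hQ.sqrt * hQ.sqrt = Q := hQ.sqrt_mul_self
  have hsym := herm_inner_symm hQ.posSemidef_sqrt.isHermitian
  have hfact : ∀ u v : EuclideanSpace ℝ n, ⟪u, Matrix.toEuclideanLin Q v⟫ =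
      ⟪Matrix.toEuclideanLin hQ.sqrt u, Matrix.toEuclideanLin hQ.sqrt v⟫ := by
    intro u v
    rw [hsym]
    rw [← toEuclideanLin_mul_apply, hR]
  rw [hfact d e, hfact d d, hfact e e]
  have := real_inner_mul_inner_self_le (Matrix.toEuclideanLin hQ.sqrt d)
    (Matrix.toEuclideanLin hQ.sqrt e)
  nlinarith [this]

end MatrixLemmas2

lemma hasGradientAt_augLag {N : ℕ} (f : EuclideanSpace ℝ (Fin N) → ℝ) (α : ℝ)
    (Z : Matrix (Fin N) (Fin N) ℝ) (hZ : Z.PosSemidef)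
    (lam x : EuclideanSpace ℝ (Fin N)) (hfd : DifferentiableAt ℝ f x) :
    HasGradientAt (fun y => augLag N f α Z hZ y lam)
      (gradient f x + Matrix.toEuclideanLin hZ.sqrt lam +
        α • Matrix.toEuclideanLin Z x) x := by
  set Scl : (EuclideanSpace ℝ (Fin N)) →L[ℝ] (EuclideanSpace ℝ (Fin N)) := (Matrix.toEuclideanLin hZ.sqrt).toContinuousLinearMap with hScl
  set Zcl : (EuclideanSpace ℝ (Fin N)) →L[ℝ] (EuclideanSpace ℝ (Fin N)) := (Matrix.toEuclideanLin Z).toContinuousLinearMap with hZcl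
  have h1 : HasFDerivAt f (InnerProductSpace.toDual ℝ (EuclideanSpace ℝ (Fin N)) (gradient f x)) x :=
    hfd.hasGradientAt.hasFDerivAt
  have h2 : HasFDerivAt (fun y : (EuclideanSpace ℝ (Fin N)) => ⟪lam, Matrix.toEuclideanLin hZ.sqrt y⟫)
      ((innerSL ℝ lam).comp Scl) x := by
    have := ((innerSL ℝ lam).comp Scl).hasFDerivAt (x := x)
    convert this using 2
    simp [Scl]
  have h3 : HasFDerivAt (fun y : (EuclideanSpace ℝ (Fin N)) => α / 2 * ⟪y, Matrix.toEuclideanLin Z y⟫)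
      ((α / 2) • ((fderivInnerCLM ℝ (x, Zcl x)).comp
        ((ContinuousLinearMap.id ℝ (EuclideanSpace ℝ (Fin N))).prod Zcl))) x := by
    have hz : HasFDerivAt (fun y : (EuclideanSpace ℝ (Fin N)) => (Zcl y : (EuclideanSpace ℝ (Fin N)))) Zcl x := Zcl.hasFDerivAt
    have := ((hasFDerivAt_id x).inner ℝ hz).const_mul (α / 2)
    exact this
  have hsum := (h1.add h2).add h3
  have hfun : (fun y : (EuclideanSpace ℝ (Fin N)) => f y + ⟪lam, Matrix.toEuclideanLin hZ.sqrt y⟫ +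
      α / 2 * ⟪y, Matrix.toEuclideanLin Z y⟫) = fun y => augLag N f α Z hZ y lam := rfl
  replace hsum : HasFDerivAt (fun y => augLag N f α Z hZ y lam) _ x := hsum
  rw [HasGradientAt, HasGradientAtFilter]
  have heq : InnerProductSpace.toDual ℝ (EuclideanSpace ℝ (Fin N)) (gradient f x + Matrix.toEuclideanLin hZ.sqrt lam +
      α • Matrix.toEuclideanLin Z x) =
      InnerProductSpace.toDual ℝ (EuclideanSpace ℝ (Fin N)) (gradient f x) + (innerSL ℝ lam).comp Scl +
        (α / 2) • ((fderivInnerCLM ℝ (x, Zcl x)).comp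
          ((ContinuousLinearMap.id ℝ (EuclideanSpace ℝ (Fin N))).prod Zcl)) := by
    ext v
    simp only [InnerProductSpace.toDual_apply_apply, ContinuousLinearMap.add_apply,
      ContinuousLinearMap.smul_apply, ContinuousLinearMap.comp_apply, innerSL_apply_apply,
      fderivInnerCLM_apply, ContinuousLinearMap.prod_apply, ContinuousLinearMap.id_apply,
      LinearMap.coe_toContinuousLinearMap', smul_eq_mul]
    rw [inner_add_left, inner_add_left, inner_smul_left]
    rw [herm_inner_symm hZ.posSemidef_sqrt.isHermitian lam v]
    rw [hScl, hZcl]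
    simp only [LinearMap.coe_toContinuousLinearMap', starRingEnd_apply, star_trivial]
    have hzv : ⟪v, Matrix.toEuclideanLin Z x⟫ = ⟪x, Matrix.toEuclideanLin Z v⟫ := by
      rw [← herm_inner_symm hZ.1 v x, real_inner_comm]
    rw [hzv, herm_inner_symm hZ.1 x v]
    ring
  rw [heq]
  exact hsum

lemma convexOn_rest {N : ℕ} (α : ℝ) (hα : 0 ≤ α)
    (Z : Matrix (Fin N) (Fin N) ℝ) (hZ : Z.PosSemidef)
    (lam : EuclideanSpace ℝ (Fin N)) :
    ConvexOn ℝ Set.univ (fun y : EuclideanSpace ℝ (Fin N) =>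
      ⟪lam, Matrix.toEuclideanLin hZ.sqrt y⟫ + α / 2 * ⟪y, Matrix.toEuclideanLin Z y⟫) := by
  refine ⟨convex_univ, ?_⟩
  intro u _ v _ a b ha hb hab
  simp only [smul_eq_mul]
  have hmap : ∀ (A : Matrix (Fin N) (Fin N) ℝ),
      Matrix.toEuclideanLin A (a • u + b • v) =
        a • Matrix.toEuclideanLin A u + b • Matrix.toEuclideanLin A v := by
    intro A; rw [map_add, _root_.map_smul, _root_.map_smul]
  rw [hmap, hmap]
  rw [inner_add_right, inner_smul_right, inner_smul_right]
  rw [inner_add_left, inner_add_right, inner_add_right]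
  simp only [inner_smul_left, inner_smul_right, RCLike.ofReal_real_eq_id, id_eq,
    starRingEnd_apply, star_trivial]
  have hsymm : ⟪v, Matrix.toEuclideanLin Z u⟫ = ⟪u, Matrix.toEuclideanLin Z v⟫ := by
    rw [← herm_inner_symm hZ.1 v u, real_inner_comm]
  have hpsd : 0 ≤ ⟪u - v, Matrix.toEuclideanLin Z (u - v)⟫ := psd_inner_nonneg hZ _
  rw [map_sub, inner_sub_left, inner_sub_right, inner_sub_right] at hpsd
  rw [hsymm] at hpsd ⊢
  have hb' : b = 1 - a := by linarith
  subst hb'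
  nlinarith [mul_nonneg (mul_nonneg (mul_nonneg ha hb) (by linarith : (0:ℝ) ≤ α / 2)) hpsd,
    mul_nonneg ha hb, hpsd]

lemma strongConvexOn_augLag {N : ℕ} (f : EuclideanSpace ℝ (Fin N) → ℝ) {μ : ℝ}
    (hsc : StrongConvexOn Set.univ μ f) (α : ℝ) (hα : 0 ≤ α)
    (Z : Matrix (Fin N) (Fin N) ℝ) (hZ : Z.PosSemidef)
    (lam : EuclideanSpace ℝ (Fin N)) :
    StrongConvexOn Set.univ μ (fun y => augLag N f α Z hZ y lam) := by
  have hr := convexOn_rest α hα Z hZ lam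
  have := hsc.add hr.uniformConvexOn_zero
  have hfun : (fun y => augLag N f α Z hZ y lam) = f + fun y =>
      ⟪lam, Matrix.toEuclideanLin hZ.sqrt y⟫ + α / 2 * ⟪y, Matrix.toEuclideanLin Z y⟫ := by
    funext y
    simp only [Pi.add_apply, augLag]
    ring
  rw [StrongConvexOn, hfun]
  convert this using 2
  simp

lemma key_quad (A B c M k : ℝ) (hA : 0 ≤ A) (hB : 0 ≤ B) (hM : 0 ≤ M) (hk : 0 ≤ k)
    (hc : c ^ 2 ≤ A * B) : 0 ≤ (M + k) * A + 2 * (M - k) * c + (M + k) * B := by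
  have hPQ : 0 ≤ ((M + k) * (A + B)) ^ 2 - (2 * (M - k) * c) ^ 2 := by
    nlinarith [mul_nonneg (sq_nonneg (M - k)) (sub_nonneg.2 hc),
      sq_nonneg ((M + k) * (A - B)),
      mul_nonneg (mul_nonneg hM hk) (mul_nonneg hA hB)]
  nlinarith [hPQ, mul_nonneg (add_nonneg hM hk) (add_nonneg hA hB)]

set_option maxHeartbeats 2000000 in
/-- Lemma 3.4: with `L_g = ρ/μ` and `λ⁺ = λ + γ P Z^{1/2} x`, the dual optimality gap satisfies `g(λ*) − g(λ⁺) ≤ [g(λ*) − g(λ)] − (1/2 − L_g γ₂)‖∇g(λ)‖²_{γP} + ((2 L_g ρ γ₂² + ρ γ₂)/(2μ²)) ‖∇_x L̃_α(x,λ)‖²`. -/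
theorem dual_gap_decrease
    (N : ℕ) (hN : 0 < N)
    (f : EuclideanSpace ℝ (Fin N) → ℝ) (μ L : ℝ) (hμ : 0 < μ) (hL : 0 < L)
    (hf : ContDiff ℝ 2 f)
    (hsc : StrongConvexOn Set.univ μ f)
    (hlip : LipschitzWith L.toNNReal (gradient f))
    (Z : Matrix (Fin N) (Fin N) ℝ) (hZ : Z.PosSemidef) (hZ0 : Z ≠ 0)
    (ρ σ : ℝ)
    (hρ : ρ ∈ spectrum ℝ Z) (hρmax : ∀ c ∈ spectrum ℝ Z, c ≤ ρ)
    (hσ : σ ∈ spectrum ℝ Z) (hσpos : 0 < σ) (hσmin : ∀ c ∈ spectrum ℝ Z, 0 < c → σ ≤ c)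
    (α : ℝ) (hα : 0 < α)
    (xstar : EuclideanSpace ℝ (Fin N) → EuclideanSpace ℝ (Fin N))
    (hxstar : ∀ lam, IsMinOn (fun x => augLag N f α Z hZ x lam) Set.univ (xstar lam))
    (g : EuclideanSpace ℝ (Fin N) → ℝ)
    (hg : ∀ lam, g lam = augLag N f α Z hZ (xstar lam) lam)
    (γ γ₂ : ℝ) (hγ : 0 < γ) (hγ₂ : 0 < γ₂)
    (P : Matrix (Fin N) (Fin N) ℝ) (hP : P.PosSemidef)
    (hPle : (γ₂ • (1 : Matrix (Fin N) (Fin N) ℝ) - γ • P).PosSemidef)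
    (lamstar : EuclideanSpace ℝ (Fin N))
    (hmax : IsMaxOn g Set.univ lamstar)
    :
    ∀ (lam x : EuclideanSpace ℝ (Fin N)),
      g lamstar - g (lam + γ • Matrix.toEuclideanLin P (Matrix.toEuclideanLin hZ.sqrt x)) ≤
        (g lamstar - g lam) -
          (1 / 2 - ρ / μ * γ₂) *
            ⟪Matrix.toEuclideanLin hZ.sqrt (xstar lam),
              Matrix.toEuclideanLin (γ • P) (Matrix.toEuclideanLin hZ.sqrt (xstar lam))⟫ +
          (2 * (ρ / μ) * ρ * γ₂ ^ 2 + ρ * γ₂) / (2 * μ ^ 2) *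
            ‖gradient (fun y => augLag N f α Z hZ y lam) x‖ ^ 2 := by
  intro lam x
  have hρ0 : (0 : ℝ) ≤ ρ := le_trans hσpos.le (hρmax σ hσ)
  have hdifff : Differentiable ℝ f := hf.differentiable (by norm_num)
  have hSC : ∀ l, StrongConvexOn Set.univ μ (fun y => augLag N f α Z hZ y l) :=
    fun l => strongConvexOn_augLag f hsc α hα.le Z hZ l
  have hGA : ∀ (l y : EuclideanSpace ℝ (Fin N)),
      HasGradientAt (fun y' => augLag N f α Z hZ y' l)
        (gradient f y + Matrix.toEuclideanLin hZ.sqrt l + α • Matrix.toEuclideanLin Z y) y :=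
    fun l y => hasGradientAt_augLag f α Z hZ l y (hdifff y)
  have hSsym := herm_inner_symm hZ.posSemidef_sqrt.isHermitian
  have hQpsd : (γ • P).PosSemidef := psd_smul hP hγ.le
  have hQsym := herm_inner_symm hQpsd.1
  -- norm of S v bounded by ρ
  have hSS : ∀ v : EuclideanSpace ℝ (Fin N),
      ‖Matrix.toEuclideanLin hZ.sqrt v‖ ^ 2 = ⟪v, Matrix.toEuclideanLin Z v⟫ := by
    intro v
    rw [← real_inner_self_eq_norm_sq, hSsym, ← toEuclideanLin_mul_apply, hZ.sqrt_mul_self]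
  have hZρ : ∀ v : EuclideanSpace ℝ (Fin N), ⟪v, Matrix.toEuclideanLin Z v⟫ ≤ ρ * ‖v‖ ^ 2 :=
    fun v => quad_le_of_psd_sub (posSemidef_smul_one_sub_of_spectrum hZ.1 hρmax) v
  -- quadratic growth of augLag above its minimum value
  have growth : ∀ (l y : EuclideanSpace ℝ (Fin N)),
      g l + μ / 2 * ‖y - xstar l‖ ^ 2 ≤ augLag N f α Z hZ y l := by
    intro l y
    have := strongConvexOn_min_growth (hSC l) (hGA l (xstar l)) (hxstar l) y
    rw [← hg l] at this
    exact this
  -- descent-type lower bound for the dual function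
  have glower : ∀ δ' : EuclideanSpace ℝ (Fin N),
      2 * μ * (g lam) + 2 * μ * ⟪δ', Matrix.toEuclideanLin hZ.sqrt (xstar lam)⟫ -
        ρ * ‖δ'‖ ^ 2 ≤ 2 * μ * (g (lam + δ')) := by
    intro δ'
    have e1 : g (lam + δ') = augLag N f α Z hZ (xstar (lam + δ')) lam +
        ⟪δ', Matrix.toEuclideanLin hZ.sqrt (xstar (lam + δ'))⟫ := by
      rw [hg]
      simp only [augLag, inner_add_left]
      ring
    have e2 : g lam + μ / 2 * ‖xstar (lam + δ') - xstar lam‖ ^ 2 ≤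
        augLag N f α Z hZ (xstar (lam + δ')) lam := growth lam (xstar (lam + δ'))
    have e3 : ⟪δ', Matrix.toEuclideanLin hZ.sqrt (xstar (lam + δ'))⟫ =
        ⟪δ', Matrix.toEuclideanLin hZ.sqrt (xstar lam)⟫ +
          ⟪Matrix.toEuclideanLin hZ.sqrt δ', xstar (lam + δ') - xstar lam⟫ := by
      rw [hSsym δ' (xstar (lam + δ') - xstar lam), map_sub, inner_sub_right]
      ring
    have e4 : -(‖Matrix.toEuclideanLin hZ.sqrt δ'‖ * ‖xstar (lam + δ') - xstar lam‖) ≤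
        ⟪Matrix.toEuclideanLin hZ.sqrt δ', xstar (lam + δ') - xstar lam⟫ := by
      have := abs_real_inner_le_norm (Matrix.toEuclideanLin hZ.sqrt δ')
        (xstar (lam + δ') - xstar lam)
      have h2 := neg_abs_le ⟪Matrix.toEuclideanLin hZ.sqrt δ', xstar (lam + δ') - xstar lam⟫
      linarith
    have e5 : ‖Matrix.toEuclideanLin hZ.sqrt δ'‖ ^ 2 ≤ ρ * ‖δ'‖ ^ 2 :=
      (hSS δ').le.trans (hZρ δ')
    nlinarith [sq_nonneg (μ * ‖xstar (lam + δ') - xstar lam‖ -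
        ‖Matrix.toEuclideanLin hZ.sqrt δ'‖),
      norm_nonneg (xstar (lam + δ') - xstar lam),
      norm_nonneg (Matrix.toEuclideanLin hZ.sqrt δ'), hμ]
  -- gradient bound: μ² ‖x - x*‖² ≤ ‖∇ₓ L̃(x,λ)‖²
  have hGradEq : gradient (fun y => augLag N f α Z hZ y lam) x =
      gradient f x + Matrix.toEuclideanLin hZ.sqrt lam + α • Matrix.toEuclideanLin Z x :=
    (hGA lam x).gradient
  have hgr : μ ^ 2 * ‖x - xstar lam‖ ^ 2 ≤
      ‖gradient (fun y => augLag N f α Z hZ y lam) x‖ ^ 2 := by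
    set G := gradient f x + Matrix.toEuclideanLin hZ.sqrt lam + α • Matrix.toEuclideanLin Z x
      with hGdef
    have hfo := strongConvexOn_first_order (hSC lam) (hGA lam x) (xstar lam)
    have hgrw := growth lam x
    rw [← hg lam] at hfo
    have hrev : ‖xstar lam - x‖ = ‖x - xstar lam‖ := norm_sub_rev _ _
    have hinn : ⟪G, xstar lam - x⟫ = -⟪G, x - xstar lam⟫ := by
      rw [show xstar lam - x = -(x - xstar lam) by abel, inner_neg_right]
    rw [hrev, hinn] at hfo
    have hkey : μ * ‖x - xstar lam‖ ^ 2 ≤ ⟪G, x - xstar lam⟫ := by linarith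
    have hub : ⟪G, x - xstar lam⟫ ≤ ‖G‖ * ‖x - xstar lam‖ := real_inner_le_norm _ _
    rw [hGradEq]
    nlinarith [sq_nonneg (‖G‖ - μ * ‖x - xstar lam‖), norm_nonneg (x - xstar lam),
      norm_nonneg G, hμ, mul_le_mul_of_nonneg_left (hkey.trans hub) hμ.le]
  -- abbreviations for the final computation
  have hδeq : γ • Matrix.toEuclideanLin P (Matrix.toEuclideanLin hZ.sqrt x) =
      Matrix.toEuclideanLin (γ • P) (Matrix.toEuclideanLin hZ.sqrt x) := by
    rw [_root_.map_smul]
    rfl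
  set Sx := Matrix.toEuclideanLin hZ.sqrt x with hSx
  set d := Matrix.toEuclideanLin hZ.sqrt (xstar lam) with hd
  set e := Sx - d with he
  set δ := Matrix.toEuclideanLin (γ • P) Sx with hδ
  have hde : Sx = d + e := by rw [he]; abel
  set A := ⟪d, Matrix.toEuclideanLin (γ • P) d⟫ with hA
  set B := ⟪e, Matrix.toEuclideanLin (γ • P) e⟫ with hB
  set cc := ⟪d, Matrix.toEuclideanLin (γ • P) e⟫ with hcc
  have hA0 : 0 ≤ A := psd_inner_nonneg hQpsd d
  have hB0 : 0 ≤ B := psd_inner_nonneg hQpsd e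
  have hcs : cc ^ 2 ≤ A * B := cs_psd hQpsd d e
  have hecc : ⟪e, Matrix.toEuclideanLin (γ • P) d⟫ = cc := by
    rw [hcc, ← hQsym e d, real_inner_comm]
  have hδd : ⟪δ, d⟫ = A + cc := by
    rw [hδ, hde, map_add, inner_add_left]
    rw [hQsym d d, hQsym e d, hecc]
  have hδnorm : ‖δ‖ ^ 2 ≤ γ₂ * (A + 2 * cc + B) := by
    have h1 := sandwich_sq_le hQpsd hPle Sx
    have h2 : ⟪Sx, Matrix.toEuclideanLin (γ • P) Sx⟫ = A + 2 * cc + B := by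
      rw [hde, map_add, inner_add_left, inner_add_right, inner_add_right, hecc]
      ring
    rw [← real_inner_self_eq_norm_sq]
    calc ⟪δ, δ⟫ ≤ γ₂ * ⟪Sx, Matrix.toEuclideanLin (γ • P) Sx⟫ := h1
      _ = γ₂ * (A + 2 * cc + B) := by rw [h2]
  have hBbound : μ ^ 2 * B ≤ γ₂ * ρ * ‖gradient (fun y => augLag N f α Z hZ y lam) x‖ ^ 2 := by
    have hBe : B ≤ γ₂ * ‖e‖ ^ 2 := quad_le_of_psd_sub hPle e
    have heS : e = Matrix.toEuclideanLin hZ.sqrt (x - xstar lam) := by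
      rw [he, hSx, hd, map_sub]
    have he2 : ‖e‖ ^ 2 ≤ ρ * ‖x - xstar lam‖ ^ 2 := by
      rw [heS]
      exact (hSS _).le.trans (hZρ _)
    nlinarith [mul_le_mul_of_nonneg_left hBe (sq_nonneg μ),
      mul_le_mul_of_nonneg_left he2 (mul_nonneg (sq_nonneg μ) hγ₂.le),
      mul_le_mul_of_nonneg_left hgr (mul_nonneg hγ₂.le hρ0)]
  have hgl := glower δ
  rw [hδd] at hgl
  have keyq := key_quad A B cc μ (ρ * γ₂) hA0 hB0 hμ.le (by positivity) hcs
  rw [hδeq]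
  rw [← sub_nonneg]
  have hX : 0 ≤ 2 * μ ^ 3 * (g lamstar - g lam -
      (1 / 2 - ρ / μ * γ₂) * A +
      (2 * (ρ / μ) * ρ * γ₂ ^ 2 + ρ * γ₂) / (2 * μ ^ 2) *
        ‖gradient (fun y => augLag N f α Z hZ y lam) x‖ ^ 2 -
      (g lamstar - g (lam + δ))) := by
    have hpoly : 2 * μ ^ 3 * (g lamstar - g lam -
        (1 / 2 - ρ / μ * γ₂) * A +
        (2 * (ρ / μ) * ρ * γ₂ ^ 2 + ρ * γ₂) / (2 * μ ^ 2) *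
          ‖gradient (fun y => augLag N f α Z hZ y lam) x‖ ^ 2 -
        (g lamstar - g (lam + δ))) =
        2 * μ ^ 3 * (g (lam + δ)) - 2 * μ ^ 3 * (g lam) -
          (μ ^ 3 - 2 * ρ * μ ^ 2 * γ₂) * A +
          (2 * ρ ^ 2 * γ₂ ^ 2 + μ * ρ * γ₂) *
            ‖gradient (fun y => augLag N f α Z hZ y lam) x‖ ^ 2 := by
      field_simp
      ring
    rw [hpoly]
    nlinarith [mul_le_mul_of_nonneg_left hgl (sq_nonneg μ),
      mul_le_mul_of_nonneg_left hδnorm (mul_nonneg (sq_nonneg μ) hρ0),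
      mul_nonneg (sq_nonneg μ) keyq,
      mul_le_mul_of_nonneg_left hBbound
        (by positivity : (0:ℝ) ≤ 2 * ρ * γ₂ + μ)]
  nlinarith [hX, pow_pos hμ 3]

end
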